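/- Let C be an N×M and D an M×N matrix with nonnegative integer entries, and set A = CD, B = DC. Then the matrix identity D̂ · S_B = S_A · C holds. Consequently, for every vector v ∈ ℤ^{E_A}, the vectors S_Bᵀ D̂ᵀ v and Cᵀ S_Aᵀ v have the same class in ℤ^M/(I−Bᵀ)ℤ^M; that is, the induced homomorphisms on quotient groups satisfy Φ_{S_Bᵀ} ∘ Φ_{D̂ᵀ} = Φ_{Cᵀ} ∘ Φ_{S_Aᵀ}. -/

import Mathlib

/-!
The entry of `D̂ S_B` at `(a, j)`, with `a = (c, d)`, counts the edges `(d, c')` of `B` whose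
target `t(c')` is `j`, i.e. the edges of `C` from `t(d)` to `j`; there are `C(t(d), j)` of them,
which is also the entry of `S_A C`. Transposing, `S_Bᵀ D̂ᵀ = Cᵀ S_Aᵀ`, so the two vectors already
agree in `ℤ^M`, before passing to the quotient.
-/

open Matrix

/-- The edge set of the directed graph of a rectangular matrix `C` with nonnegative integer
entries: there are `C i j` edges from vertex `i` to vertex `j`. -/
def Edge {N M : ℕ} (C : Matrix (Fin N) (Fin M) ℕ) : Type :=
  Σ i : Fin N, Σ j : Fin M, Fin (C i j)

instance {N M : ℕ} (C : Matrix (Fin N) (Fin M) ℕ) : Fintype (Edge C) := by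
  unfold Edge
  haveI : ∀ i j, Fintype (Fin (C i j)) := fun i j => Fin.fintype _
  infer_instance

instance {N M : ℕ} (C : Matrix (Fin N) (Fin M) ℕ) : DecidableEq (Edge C) := by
  unfold Edge; infer_instance

/-- The source vertex of an edge. -/
def Edge.src {N M : ℕ} {C : Matrix (Fin N) (Fin M) ℕ} (e : Edge C) : Fin N := e.1

/-- The target vertex of an edge. -/
def Edge.tar {N M : ℕ} {C : Matrix (Fin N) (Fin M) ℕ} (e : Edge C) : Fin M := e.2.1

/-- The edge set of `A = CD`, realized as composable pairs `(c, d)` of edges of `C` and `D`. -/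
def PairEdgeA {N M : ℕ} (C : Matrix (Fin N) (Fin M) ℕ) (D : Matrix (Fin M) (Fin N) ℕ) :
    Type :=
  {p : Edge C × Edge D // p.1.tar = p.2.src}

/-- The edge set of `B = DC`, realized as composable pairs `(d, c)` of edges of `D` and `C`. -/
def PairEdgeB {N M : ℕ} (C : Matrix (Fin N) (Fin M) ℕ) (D : Matrix (Fin M) (Fin N) ℕ) :
    Type :=
  {p : Edge D × Edge C // p.1.tar = p.2.src}

instance {N M : ℕ} (C : Matrix (Fin N) (Fin M) ℕ) (D : Matrix (Fin M) (Fin N) ℕ) :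
    Fintype (PairEdgeA C D) := by unfold PairEdgeA; infer_instance

instance {N M : ℕ} (C : Matrix (Fin N) (Fin M) ℕ) (D : Matrix (Fin M) (Fin N) ℕ) :
    Fintype (PairEdgeB C D) := by unfold PairEdgeB; infer_instance

instance {N M : ℕ} (C : Matrix (Fin N) (Fin M) ℕ) (D : Matrix (Fin M) (Fin N) ℕ) :
    DecidableEq (PairEdgeA C D) := by unfold PairEdgeA; infer_instance

instance {N M : ℕ} (C : Matrix (Fin N) (Fin M) ℕ) (D : Matrix (Fin M) (Fin N) ℕ) :
    DecidableEq (PairEdgeB C D) := by unfold PairEdgeB; infer_instance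

namespace Edge

variable {N M : ℕ} {R : Type*}

theorem sum_eq_sum_sum_sum [AddCommMonoid R] (C : Matrix (Fin N) (Fin M) ℕ) (f : Edge C → R) :
    ∑ e, f e = ∑ i, ∑ j, ∑ k : Fin (C i j), f ⟨i, j, k⟩ := by
  let : ∀ i j, Fintype (Fin (C i j)) := fun _ _ => Fin.fintype _
  -- `Equiv.refl` moves the sum from the `Fintype (Edge C)` instance to the sigma-type one.
  exact (Fintype.sum_equiv (Equiv.refl (Σ i, Σ j, Fin (C i j))) f f fun _ => rfl).trans <|
    (Fintype.sum_sigma f).trans (Fintype.sum_congr _ _ fun _ => Fintype.sum_sigma _)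

theorem sum_ite_src_tar [AddCommMonoidWithOne R] (C : Matrix (Fin N) (Fin M) ℕ)
    (i : Fin N) (j : Fin M) :
    ∑ e : Edge C, (if e.src = i ∧ e.tar = j then (1 : R) else 0) = C i j := by
  rw [sum_eq_sum_sum_sum, Fintype.sum_eq_single i fun i' hi' => by simp [src, hi'],
    Fintype.sum_eq_single j fun j' hj' => by simp [tar, hj']]
  simp [src, tar]

end Edge

namespace PairEdgeB

variable {N M : ℕ} {R : Type*} (C : Matrix (Fin N) (Fin M) ℕ) (D : Matrix (Fin M) (Fin N) ℕ)

theorem sum_ite_fst_eq [AddCommMonoid R] (d : Edge D) (f : Edge C → R) :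
    ∑ b : PairEdgeB C D, (if d = b.val.1 then f b.val.2 else 0) =
      ∑ c : Edge C, if c.src = d.tar then f c else 0 := by
  change ∑ b : {p : Edge D × Edge C // p.1.tar = p.2.src}, _ = _
  rw [← Finset.sum_subtype (Finset.univ.filter fun p : Edge D × Edge C => p.1.tar = p.2.src)
    (by simp) fun p => if d = p.1 then f p.2 else 0, Finset.sum_filter, Fintype.sum_prod_type,
    Fintype.sum_eq_single d fun d' hd' => by simp [Ne.symm hd']]
  simp only [if_true, eq_comm]

end PairEdgeB

section Matrices

variable (R : Type*) [Zero R] [One R] {N M : ℕ} (C : Matrix (Fin N) (Fin M) ℕ)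
  (D : Matrix (Fin M) (Fin N) ℕ)

def dHat : Matrix (PairEdgeA C D) (PairEdgeB C D) R :=
  of fun a b => if a.val.2 = b.val.1 then 1 else 0

def sA : Matrix (PairEdgeA C D) (Fin N) R :=
  of fun a j => if a.val.2.tar = j then 1 else 0

def sB : Matrix (PairEdgeB C D) (Fin M) R :=
  of fun b j => if b.val.2.tar = j then 1 else 0

end Matrices

theorem dHat_mul_sB {R : Type*} [NonAssocSemiring R] {N M : ℕ} (C : Matrix (Fin N) (Fin M) ℕ)
    (D : Matrix (Fin M) (Fin N) ℕ) :
    dHat R C D * sB R C D = sA R C D * (C.map Nat.cast : Matrix (Fin N) (Fin M) R) := by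
  refine Matrix.ext fun a j => ?_
  rw [mul_apply, mul_apply]
  simp only [dHat, sB, sA, of_apply, map_apply, ite_mul, one_mul, zero_mul]
  rw [Finset.sum_ite_eq, if_pos (Finset.mem_univ _)]
  refine (PairEdgeB.sum_ite_fst_eq C D a.val.2 fun c => if c.tar = j then (1 : R) else 0).trans ?_
  simp only [← ite_and]
  exact Edge.sum_ite_src_tar C _ j

/-- Let `C`, `D` be rectangular nonnegative integer matrices, `A = CD`,
`B = DC`.  Then `D̂ · S_B = S_A · C`, and consequently for every `v ∈ ℤ^{E_A}` the vectors
`S_Bᵀ D̂ᵀ v` and `Cᵀ S_Aᵀ v` have the same class in `ℤ^M/(I−Bᵀ)ℤ^M`; that is,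
`Φ_{S_Bᵀ} ∘ Φ_{D̂ᵀ} = Φ_{Cᵀ} ∘ Φ_{S_Aᵀ}`. -/
theorem stmt_5 (N M : ℕ) (C : Matrix (Fin N) (Fin M) ℕ) (D : Matrix (Fin M) (Fin N) ℕ) :
    let Cz : Matrix (Fin N) (Fin M) ℤ := C.map (Nat.cast : ℕ → ℤ)
    let Dz : Matrix (Fin M) (Fin N) ℤ := D.map (Nat.cast : ℕ → ℤ)
    let Bz : Matrix (Fin M) (Fin M) ℤ := Dz * Cz
    let Dhat : Matrix (PairEdgeA C D) (PairEdgeB C D) ℤ :=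
      Matrix.of fun a b => if a.val.2 = b.val.1 then 1 else 0
    let SA : Matrix (PairEdgeA C D) (Fin N) ℤ :=
      Matrix.of fun a j => if a.val.2.tar = j then 1 else 0
    let SB : Matrix (PairEdgeB C D) (Fin M) ℤ :=
      Matrix.of fun b j => if b.val.2.tar = j then 1 else 0
    Dhat * SB = SA * Cz ∧
    ∀ v : PairEdgeA C D → ℤ,
      (QuotientAddGroup.mk (SBᵀ.mulVec (Dhatᵀ.mulVec v)) :
          (Fin M → ℤ) ⧸ AddMonoidHom.range (1 - Bzᵀ).mulVecLin.toAddMonoidHom) =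
        QuotientAddGroup.mk (Czᵀ.mulVec (SAᵀ.mulVec v)) := by
  intro Cz _ _ Dhat SA SB
  have hmul : Dhat * SB = SA * Cz := dHat_mul_sB C D
  refine ⟨hmul, fun v => ?_⟩
  rw [mulVec_mulVec, mulVec_mulVec, ← transpose_mul, ← transpose_mul, hmul]
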